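/- arXiv:2003.14212 — 2 statements merged into one kernel-verified Lean document; each statement's English description precedes it below -/
import Mathlib

section
/- Let ω₂ = P dx + Q dy be a 1-form on ℂ² whose coefficients P, Q are homogeneous polynomials of degree ν in x, y, with (P,Q) ≠ (0,0), and suppose xP + yQ is not identically zero (i.e. ω₂ does not define the radial foliation). If H and H̃ are nonzero homogeneous polynomials of the same degree N+1 ≥ 1 that are both first integrals of ker(ω₂) (i.e. dH ∧ ω₂ = 0 and dH̃ ∧ ω₂ = 0), then H and H̃ are proportional: there exists c ∈ ℂ with H = c·H̃. -/
/-!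
Euler's identity `x H_x + y H_y = (N+1) H` turns `H_x Q = H_y P` into
`H_x (xP + yQ) = (N+1) H P`. Since `xP + yQ ≠ 0`, two such first integrals satisfy
`H_x H̃ = H̃_x H`, so their dehomogenizations `H(x,1)`, `H̃(x,1)` have vanishing Wronskian.
After dividing out their gcd the coprime cofactors have zero Wronskian, hence are constants,
so `H(x,1) = c H̃(x,1)`; a homogeneous polynomial is recovered from its dehomogenization.
-/

open MvPolynomial

theorem Polynomial.exists_eq_smul_of_wronskian_eq_zero {K : Type*} [Field K] [CharZero K]
    {f g : Polynomial K} (hg : g ≠ 0) (hw : wronskian f g = 0) : ∃ c : K, f = c • g := by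
  classical
  obtain ⟨a, b, hfa, hgb, hu⟩ := extract_gcd f g
  set d := gcd f g
  rw [hgb] at hg
  rw [hfa, hgb] at hw ⊢
  have hab : wronskian a b = 0 := by
    have : wronskian (d * a) (d * b) = d ^ 2 * wronskian a b := by
      simp only [wronskian, derivative_mul]; ring
    rw [this] at hw
    exact (mul_eq_zero.mp hw).resolve_left (pow_ne_zero 2 (left_ne_zero_of_mul hg))
  obtain ⟨ha', hb'⟩ := (gcd_isUnit_iff_isRelPrime.mp hu).isCoprime.wronskian_eq_zero_iff.mp hab
  rw [eq_C_of_derivative_eq_zero hb'] at hg ⊢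
  rw [eq_C_of_derivative_eq_zero ha']
  have hb : b.coeff 0 ≠ 0 := by simpa using right_ne_zero_of_mul hg
  refine ⟨a.coeff 0 / b.coeff 0, ?_⟩
  rw [smul_eq_C_mul, mul_left_comm, ← C_mul, div_mul_cancel₀ _ hb]

namespace MvPolynomial

theorem aeval_X_one_pderiv_zero {R : Type*} [CommSemiring R] (p : MvPolynomial (Fin 2) R) :
    aeval ![Polynomial.X, 1] (pderiv 0 p) =
      Polynomial.derivative (aeval ![(Polynomial.X : Polynomial R), 1] p) := by
  induction p using MvPolynomial.induction_on with
  | C a => simp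
  | add p q hp hq => simp only [map_add, hp, hq]
  | mul_X p j hp =>
    rw [pderiv_mul, map_add, map_mul, map_mul, map_mul, Polynomial.derivative_mul, hp]
    fin_cases j <;> simp

section FirstIntegral

variable {R : Type*} [CommRing R] {n : ℕ} {P Q H H' : MvPolynomial (Fin 2) R}

theorem IsHomogeneous.pderiv_zero_mul_radial (hH : H.IsHomogeneous n)
    (hint : pderiv 0 H * Q - pderiv 1 H * P = 0) :
    pderiv 0 H * (X 0 * P + X 1 * Q) = n • H * P := by
  have euler := hH.sum_X_mul_pderiv
  rw [Fin.sum_univ_two] at euler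
  linear_combination P * euler + X 1 * hint

theorem IsHomogeneous.pderiv_zero_mul_eq_of_firstIntegral [IsDomain R]
    (hH : H.IsHomogeneous n) (hH' : H'.IsHomogeneous n) (hrad : X 0 * P + X 1 * Q ≠ 0)
    (hint : pderiv 0 H * Q - pderiv 1 H * P = 0)
    (hint' : pderiv 0 H' * Q - pderiv 1 H' * P = 0) :
    pderiv 0 H * H' = pderiv 0 H' * H := by
  have h := hH.pderiv_zero_mul_radial hint
  have h' := hH'.pderiv_zero_mul_radial hint'
  refine sub_eq_zero.mp ((mul_eq_zero.mp ?_).resolve_right hrad)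
  linear_combination H' * h - H * h'

end FirstIntegral

end MvPolynomial

theorem stmt0_general (N : ℕ) (P Q H H' : MvPolynomial (Fin 2) ℂ)
    (hrad : X 0 * P + X 1 * Q ≠ 0)
    (hH : H.IsHomogeneous (N + 1)) (hH' : H'.IsHomogeneous (N + 1))
    (hH'ne : H' ≠ 0)
    (hint : pderiv 0 H * Q - pderiv 1 H * P = 0)
    (hint' : pderiv 0 H' * Q - pderiv 1 H' * P = 0) :
    ∃ c : ℂ, H = c • H' := by
  set φ : MvPolynomial (Fin 2) ℂ →ₐ[ℂ] Polynomial ℂ := aeval ![Polynomial.X, 1]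
  have hφH' : φ H' ≠ 0 := fun h ↦
    hH'ne (by rw [← Polynomial.homogenize_eq_of_isHomogeneous hH' h, Polynomial.homogenize_zero])
  have hw : (φ H).wronskian (φ H') = 0 := by
    have h := congrArg φ (hH.pderiv_zero_mul_eq_of_firstIntegral hH' hrad hint hint')
    simp only [map_mul, φ, aeval_X_one_pderiv_zero] at h
    rw [Polynomial.wronskian]
    linear_combination -h
  obtain ⟨c, hc⟩ := Polynomial.exists_eq_smul_of_wronskian_eq_zero hφH' hw
  refine ⟨c, ?_⟩
  calc H = (φ H).homogenize (N + 1) := (Polynomial.homogenize_eq_of_isHomogeneous hH rfl).symm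
    _ = c • (φ H').homogenize (N + 1) := by rw [hc, Polynomial.homogenize_smul]
    _ = c • H' := by rw [Polynomial.homogenize_eq_of_isHomogeneous hH' rfl]

/-- On `ℂ[x,y]` (with `x = X 0`, `y = X 1`), let `ω₂ = P dx + Q dy` with `P, Q`
homogeneous of degree `ν`, not both zero, and `x·P + y·Q ≢ 0` (not the radial
foliation).  Two nonzero homogeneous first integrals `H, H̃` of degree `N+1 ≥ 1`
(i.e. `H_x Q - H_y P = 0`) are proportional. -/
theorem stmt0 (ν N : ℕ) (P Q H H' : MvPolynomial (Fin 2) ℂ)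
    (hP : P.IsHomogeneous ν) (hQ : Q.IsHomogeneous ν)
    (hPQ : ¬(P = 0 ∧ Q = 0))
    (hrad : X 0 * P + X 1 * Q ≠ 0)
    (hH : H.IsHomogeneous (N + 1)) (hH' : H'.IsHomogeneous (N + 1))
    (hHne : H ≠ 0) (hH'ne : H' ≠ 0)
    (hint : pderiv 0 H * Q - pderiv 1 H * P = 0)
    (hint' : pderiv 0 H' * Q - pderiv 1 H' * P = 0) :
    ∃ c : ℂ, H = c • H' :=
  stmt0_general N P Q H H' hrad hH hH' hH'ne hint hint'
end

section
/- Let ω = P dx + Q dy with P, Q formal power series of order ≥ ν, and let ω' = P' dx + Q' dy with P', Q' of order ≥ ν. Let Φ = id + Φⁿ + (higher order terms) be a formal diffeomorphism of (ℂ²,0) tangent to the identity whose lowest nonidentity homogeneous component Φⁿ has degree n ≥ 2. Then Φ*ω ∧ ω' − ω ∧ ω' − (L_{∂Φⁿ} ω^ν) ∧ ω'^ν has order at least n + 2ν, where ω^ν, ω'^ν denote the lowest (degree-ν) homogeneous components and ∂Φⁿ is the vector field with components Φⁿ. -/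
/-- Total degree of a monomial exponent in two variables. -/
def mdeg (d : Fin 2 →₀ ℕ) : ℕ := d 0 + d 1

/-- `ordGE n f`: the formal power series `f ∈ ℂ[[x,y]]` has order `≥ n`. -/
def ordGE (n : ℕ) (f : MvPowerSeries (Fin 2) ℂ) : Prop :=
  ∀ d, mdeg d < n → MvPowerSeries.coeff d f = 0

/-- `f` is homogeneous of degree `n` (as a power series: supported in degree `n`). -/
def isHomogPS (n : ℕ) (f : MvPowerSeries (Fin 2) ℂ) : Prop :=
  ∀ d, mdeg d ≠ n → MvPowerSeries.coeff d f = 0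

/-- The degree-`n` homogeneous part of a formal power series. -/
noncomputable def hpart (n : ℕ) (f : MvPowerSeries (Fin 2) ℂ) :
    MvPowerSeries (Fin 2) ℂ :=
  fun d => if mdeg d = n then MvPowerSeries.coeff d f else 0

/-- Formal partial derivative `∂/∂xᵢ` on `ℂ[[x,y]]`. -/
noncomputable def pd (i : Fin 2) (f : MvPowerSeries (Fin 2) ℂ) :
    MvPowerSeries (Fin 2) ℂ :=
  fun d => ((d i : ℂ) + 1) * MvPowerSeries.coeff (d + Finsupp.single i 1) f

/-- Substitution `f(φ, ψ)` for `φ, ψ` of positive order: the coefficient of a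
monomial of total degree `m` only involves `φ^i ψ^j` with `i + j ≤ m`. -/
noncomputable def compPS (φ ψ f : MvPowerSeries (Fin 2) ℂ) :
    MvPowerSeries (Fin 2) ℂ :=
  fun d => ∑ i ∈ Finset.range (mdeg d + 1), ∑ j ∈ Finset.range (mdeg d + 1),
    MvPowerSeries.coeff (Finsupp.single 0 i + Finsupp.single 1 j) f *
      MvPowerSeries.coeff d (φ ^ i * ψ ^ j)

/-!
Write `Φ = (x + u, y + v)` with `u = a + r₁`, `v = b + r₂` of order `≥ n`. Expanding each
monomial `(x + u)ⁱ (y + v)ʲ` by the binomial formula gives the first-order Taylor formula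
`f ∘ Φ = f + u f_x + v f_y + O(ν + n)` for `f` of order `≥ ν`: the quadratic remainder has
order `≥ ν - 2 + 2n ≥ ν + n` because `n ≥ 2`. Together with `dφ = dx + da + O(n)`, this shows
that the coefficients of `Φ*ω - ω` agree with those of `L_{∂Φⁿ} ω^ν` up to order `ν + n`,
while `L_{∂Φⁿ} ω^ν` itself has order `≥ ν + n - 1`. Wedging with `ω'`, whose coefficients have
order `≥ ν` and differ from those of `ω'^ν` in order `≥ ν + 1`, gives order `≥ n + 2ν`.
-/

open MvPowerSeries

lemma mdeg_eq_degree (d : Fin 2 →₀ ℕ) : mdeg d = d.degree := by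
  simp [mdeg, Finsupp.degree_eq_sum, Fin.sum_univ_two]

lemma mdeg_single_add_single (i j : ℕ) :
    mdeg (Finsupp.single 0 i + Finsupp.single 1 j) = i + j := by
  simp [mdeg]

lemma mdeg_add_single (d : Fin 2 →₀ ℕ) (i : Fin 2) :
    mdeg (d + Finsupp.single i 1) = mdeg d + 1 := by
  simp [mdeg_eq_degree]

lemma single_add_single_eq_iff {i j : ℕ} {e : Fin 2 →₀ ℕ} :
    Finsupp.single 0 i + Finsupp.single 1 j = e ↔ i = e 0 ∧ j = e 1 := by
  constructor
  · rintro rfl; simp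
  · rintro ⟨rfl, rfl⟩; ext k; fin_cases k <;> simp

lemma ordGE_iff_le_order {m : ℕ} {f : MvPowerSeries (Fin 2) ℂ} :
    ordGE m f ↔ (m : ℕ∞) ≤ f.order := by
  refine ⟨fun h => le_order fun d hd => h d ?_, fun h d hd => coeff_of_lt_order ?_⟩
  · rw [mdeg_eq_degree]; exact_mod_cast hd
  · rw [← mdeg_eq_degree]; exact lt_of_lt_of_le (by exact_mod_cast hd) h

lemma ordGE_zero (m : ℕ) : ordGE m (0 : MvPowerSeries (Fin 2) ℂ) :=
  fun _ _ => map_zero _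

lemma ordGE_X (s : Fin 2) : ordGE 1 (X s : MvPowerSeries (Fin 2) ℂ) := by
  rw [ordGE_iff_le_order, Nat.cast_one, one_le_order_iff_constCoeff_eq_zero, constantCoeff_X]

lemma isHomogPS.ordGE {n : ℕ} {f : MvPowerSeries (Fin 2) ℂ} (hf : isHomogPS n f) :
    ordGE n f :=
  fun d hd => hf d hd.ne

namespace ordGE

variable {m k : ℕ} {f g : MvPowerSeries (Fin 2) ℂ}

lemma mono (hf : ordGE k f) (h : m ≤ k) : ordGE m f :=
  fun d hd => hf d (hd.trans_le h)

lemma add (hf : ordGE m f) (hg : ordGE m g) : ordGE m (f + g) := by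
  rw [ordGE_iff_le_order] at *
  exact (le_min hf hg).trans min_order_le_add

lemma neg (hf : ordGE m f) : ordGE m (-f) := by
  rwa [ordGE_iff_le_order, order_neg, ← ordGE_iff_le_order]

lemma sub (hf : ordGE m f) (hg : ordGE m g) : ordGE m (f - g) := by
  rw [sub_eq_add_neg]; exact hf.add hg.neg

lemma mul (hf : ordGE m f) (hg : ordGE k g) : ordGE (m + k) (f * g) := by
  rw [ordGE_iff_le_order] at *
  exact le_trans (by push_cast; exact add_le_add hf hg) le_order_mul

lemma pow (hf : ordGE m f) (k : ℕ) : ordGE (k * m) (f ^ k) := by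
  induction k with
  | zero => exact fun _ hd => absurd hd (by simp)
  | succ k ih => rw [pow_succ, Nat.succ_mul]; exact ih.mul hf

lemma smul (hf : ordGE m f) (c : ℂ) : ordGE m (c • f) := by
  rw [ordGE_iff_le_order] at *
  exact hf.trans le_order_smul

lemma natCast_mul (hf : ordGE m f) (i : ℕ) : ordGE m ((i : MvPowerSeries (Fin 2) ℂ) * f) := by
  intro d hd
  rw [← nsmul_eq_mul, map_nsmul, hf d hd, smul_zero]

end ordGE

lemma ordGE_sum {ι : Type*} {m : ℕ} {s : Finset ι} {F : ι → MvPowerSeries (Fin 2) ℂ}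
    (h : ∀ i ∈ s, ordGE m (F i)) : ordGE m (∑ i ∈ s, F i) :=
  Finset.sum_induction F (ordGE m) (fun _ _ => ordGE.add) (ordGE_zero m) h

lemma pd_eq_pderiv (i : Fin 2) : pd i = pderiv ℂ i := by
  funext f; ext d
  rw [coeff_pderiv, mul_comm]; rfl

lemma ordGE.pd {m : ℕ} {f : MvPowerSeries (Fin 2) ℂ} (hf : ordGE m f) (i : Fin 2) :
    ordGE (m - 1) (pd i f) := by
  intro d hd
  show ((d i : ℂ) + 1) * coeff (d + Finsupp.single i 1) f = 0
  rw [hf _ (by rw [mdeg_add_single]; omega), mul_zero]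

lemma pd_add (i : Fin 2) (f g : MvPowerSeries (Fin 2) ℂ) : pd i (f + g) = pd i f + pd i g := by
  rw [pd_eq_pderiv, map_add]

lemma pd_sub (i : Fin 2) (f g : MvPowerSeries (Fin 2) ℂ) : pd i (f - g) = pd i f - pd i g := by
  rw [pd_eq_pderiv, map_sub]

lemma pd_X_add (i : Fin 2) (w : MvPowerSeries (Fin 2) ℂ) : pd i (X i + w) = 1 + pd i w := by
  rw [pd_add, pd_eq_pderiv, pderiv_X_self]

lemma pd_X_add_of_ne {i j : Fin 2} (h : j ≠ i) (w : MvPowerSeries (Fin 2) ℂ) :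
    pd i (X j + w) = pd i w := by
  rw [pd_add, pd_eq_pderiv, pderiv_X_of_ne h, zero_add]

lemma ordGE_hpart (ν : ℕ) (f : MvPowerSeries (Fin 2) ℂ) : ordGE ν (hpart ν f) := by
  intro d hd
  show (if mdeg d = ν then coeff d f else 0) = 0
  rw [if_neg hd.ne]

lemma ordGE.sub_hpart {ν : ℕ} {f : MvPowerSeries (Fin 2) ℂ} (hf : ordGE ν f) :
    ordGE (ν + 1) (f - hpart ν f) := by
  intro d hd
  show coeff d f - (if mdeg d = ν then coeff d f else 0) = 0
  split_ifs with h
  · exact sub_self _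
  · rw [sub_zero, hf d (by omega)]

lemma ordGE_add_pow_sub {n : ℕ} (hn : 2 ≤ n) {x w : MvPowerSeries (Fin 2) ℂ}
    (hx : ordGE 1 x) (hw : ordGE n w) (i : ℕ) :
    ordGE (i + n) ((x + w) ^ i - x ^ i - i * x ^ (i - 1) * w) := by
  induction i with
  | zero => simpa using ordGE_zero n
  | succ i ih =>
    have hxi : (i : MvPowerSeries (Fin 2) ℂ) * x ^ (i - 1) * x = i * x ^ i := by
      cases i <;> simp [pow_succ, mul_assoc]
    have key : (x + w) ^ (i + 1) - x ^ (i + 1) - ↑(i + 1) * x ^ (i + 1 - 1) * w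
        = (x + w) * ((x + w) ^ i - x ^ i - i * x ^ (i - 1) * w) + i * x ^ (i - 1) * w ^ 2 := by
      rw [Nat.add_sub_cancel]; push_cast; linear_combination w * hxi
    rw [key]
    apply ordGE.add
    · exact ((hx.add (hw.mono (by omega))).mul ih).mono (by omega)
    · have := ((hx.pow (i - 1)).mul (hw.pow 2)).natCast_mul i
      rw [← mul_assoc] at this
      exact this.mono (by omega)

lemma ordGE_taylor_monomial {n : ℕ} (hn : 2 ≤ n) {u v : MvPowerSeries (Fin 2) ℂ}
    (hu : ordGE n u) (hv : ordGE n v) (i j : ℕ) :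
    ordGE (i + j + n) ((X 0 + u) ^ i * (X 1 + v) ^ j - X 0 ^ i * X 1 ^ j
      - pderiv ℂ 0 (X 0 ^ i * X 1 ^ j) * u - pderiv ℂ 1 (X 0 ^ i * X 1 ^ j) * v) := by
  have h₀ : pderiv ℂ 0 (X 0 ^ i * X 1 ^ j : MvPowerSeries (Fin 2) ℂ)
      = (i : MvPowerSeries (Fin 2) ℂ) * X 0 ^ (i - 1) * X 1 ^ j := by
    simp only [Derivation.leibniz, pderiv_pow, pderiv_X_self, pderiv_X_of_ne one_ne_zero,
      smul_eq_mul, mul_zero, mul_one, zero_add]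
    ring
  have h₁ : pderiv ℂ 1 (X 0 ^ i * X 1 ^ j : MvPowerSeries (Fin 2) ℂ)
      = X 0 ^ i * ((j : MvPowerSeries (Fin 2) ℂ) * X 1 ^ (j - 1)) := by
    simp only [Derivation.leibniz, pderiv_pow, pderiv_X_self, pderiv_X_of_ne zero_ne_one,
      smul_eq_mul, mul_zero, mul_one, add_zero]
  set a₁ := (i : MvPowerSeries (Fin 2) ℂ) * X 0 ^ (i - 1) * u
  set b₁ := (j : MvPowerSeries (Fin 2) ℂ) * X 1 ^ (j - 1) * v
  have ha₁ : ordGE (i - 1 + n) a₁ := by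
    have := ((ordGE_X 0).pow (i - 1)).mul hu |>.natCast_mul i
    rw [← mul_assoc, mul_one] at this; exact this
  have hb₁ : ordGE (j - 1 + n) b₁ := by
    have := ((ordGE_X 1).pow (j - 1)).mul hv |>.natCast_mul j
    rw [← mul_assoc, mul_one] at this; exact this
  have hR := ordGE_add_pow_sub hn (ordGE_X 0) hu i
  have hS := ordGE_add_pow_sub hn (ordGE_X 1) hv j
  have key : (X 0 + u) ^ i * (X 1 + v) ^ j - X 0 ^ i * X 1 ^ j
      - pderiv ℂ 0 (X 0 ^ i * X 1 ^ j) * u - pderiv ℂ 1 (X 0 ^ i * X 1 ^ j) * v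
      = a₁ * b₁ + (X 0 ^ i + a₁) * ((X 1 + v) ^ j - X 1 ^ j - b₁)
        + ((X 0 + u) ^ i - X 0 ^ i - a₁) * (X 1 + v) ^ j := by
    rw [h₀, h₁]; ring
  rw [key]
  refine ((ha₁.mul hb₁).mono (by omega)).add ?_ |>.add ?_
  · exact ((((ordGE_X 0).pow i).add (ha₁.mono (by omega))).mul hS).mono (by omega)
  · exact (hR.mul (((ordGE_X 1).add (hv.mono (by omega))).pow j)).mono (by omega)

lemma coeff_X_pow_mul_X_pow (i j : ℕ) (e : Fin 2 →₀ ℕ) :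
    coeff e (X 0 ^ i * X 1 ^ j : MvPowerSeries (Fin 2) ℂ)
      = if i = e 0 ∧ j = e 1 then 1 else 0 := by
  rw [X_pow_eq, X_pow_eq, monomial_mul_monomial, one_mul, coeff_monomial]
  simp only [eq_comm (a := e), single_add_single_eq_iff]

/-- With `φ = X 0`, `ψ = X 1` this is the truncation of `f` to the box `[0, M]²`. -/
noncomputable def truncSubst (φ ψ : MvPowerSeries (Fin 2) ℂ) (M : ℕ)
    (f : MvPowerSeries (Fin 2) ℂ) : MvPowerSeries (Fin 2) ℂ :=
  ∑ i ∈ Finset.range (M + 1), ∑ j ∈ Finset.range (M + 1),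
    coeff (Finsupp.single 0 i + Finsupp.single 1 j) f • (φ ^ i * ψ ^ j)

lemma coeff_compPS (φ ψ f : MvPowerSeries (Fin 2) ℂ) (d : Fin 2 →₀ ℕ) :
    coeff d (compPS φ ψ f) = coeff d (truncSubst φ ψ (mdeg d) f) := by
  simp only [truncSubst, map_sum, coeff_smul]; rfl

lemma ordGE_sub_truncSubst_X (M : ℕ) (f : MvPowerSeries (Fin 2) ℂ) :
    ordGE (M + 1) (f - truncSubst (X 0) (X 1) M f) := by
  intro e he
  have h0 : e 0 < M + 1 := by unfold mdeg at he; omega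
  have h1 : e 1 < M + 1 := by unfold mdeg at he; omega
  simp only [truncSubst, map_sub, map_sum, map_smul, coeff_X_pow_mul_X_pow, ite_and,
    smul_eq_mul, mul_ite, mul_one, mul_zero, Finset.sum_ite_irrel, Finset.sum_ite_eq',
    Finset.mem_range, Finset.sum_const_zero, h0, h1, if_true]
  rw [single_add_single_eq_iff.2 ⟨rfl, rfl⟩, sub_self]

lemma ordGE_truncSubst_taylor {ν n : ℕ} (hn : 2 ≤ n) {f u v : MvPowerSeries (Fin 2) ℂ}
    (hf : ordGE ν f) (hu : ordGE n u) (hv : ordGE n v) (M : ℕ) :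
    ordGE (ν + n) (truncSubst (X 0 + u) (X 1 + v) M f - truncSubst (X 0) (X 1) M f
      - pderiv ℂ 0 (truncSubst (X 0) (X 1) M f) * u
      - pderiv ℂ 1 (truncSubst (X 0) (X 1) M f) * v) := by
  simp only [truncSubst, map_sum, Derivation.map_smul, Finset.sum_mul, smul_mul_assoc,
    ← Finset.sum_sub_distrib, ← smul_sub]
  refine ordGE_sum fun i _ => ordGE_sum fun j _ => ?_
  by_cases hc : coeff (Finsupp.single 0 i + Finsupp.single 1 j) f = 0
  · rw [hc, zero_smul]; exact ordGE_zero _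
  · have hij : ν ≤ i + j := by
      by_contra h
      exact hc (hf _ (by rw [mdeg_single_add_single]; omega))
    exact ((ordGE_taylor_monomial hn hu hv i j).smul _).mono (by omega)

lemma ordGE_compPS_sub_taylor {ν n : ℕ} (hn : 2 ≤ n) {f u v : MvPowerSeries (Fin 2) ℂ}
    (hf : ordGE ν f) (hu : ordGE n u) (hv : ordGE n v) :
    ordGE (ν + n) (compPS (X 0 + u) (X 1 + v) f - f - pd 0 f * u - pd 1 f * v) := by
  intro d hd
  set g := truncSubst (X 0) (X 1) (mdeg d) f
  have htrunc := ordGE_sub_truncSubst_X (mdeg d) f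
  have hrest : ordGE (mdeg d + 1) ((f - g) + pd 0 (f - g) * u + pd 1 (f - g) * v) := by
    refine (htrunc.add ?_).add ?_
    · exact ((htrunc.pd 0).mul hu).mono (by omega)
    · exact ((htrunc.pd 1).mul hv).mono (by omega)
  rw [pd_eq_pderiv, pd_eq_pderiv] at *
  calc coeff d (compPS (X 0 + u) (X 1 + v) f - f - pderiv ℂ 0 f * u - pderiv ℂ 1 f * v)
      = coeff d (truncSubst (X 0 + u) (X 1 + v) (mdeg d) f - g - pderiv ℂ 0 g * u
          - pderiv ℂ 1 g * v)
        - coeff d ((f - g) + pderiv ℂ 0 (f - g) * u + pderiv ℂ 1 (f - g) * v) := by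
        simp only [map_sub, map_add, sub_mul, coeff_compPS]; ring
    _ = 0 := by
        rw [ordGE_truncSubst_taylor hn hf hu hv _ d hd, hrest d (Nat.lt_succ_self _), sub_zero]

lemma ordGE_compPS_sub_self {ν n : ℕ} (hn : 2 ≤ n) {f u v : MvPowerSeries (Fin 2) ℂ}
    (hf : ordGE ν f) (hu : ordGE n u) (hv : ordGE n v) :
    ordGE (ν + 1) (compPS (X 0 + u) (X 1 + v) f - f) := by
  have h := ordGE_compPS_sub_taylor hn hf hu hv
  rw [show compPS (X 0 + u) (X 1 + v) f - f
      = (compPS (X 0 + u) (X 1 + v) f - f - pd 0 f * u - pd 1 f * v) + pd 0 f * u + pd 1 f * v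
      by ring]
  refine ((h.mono (by omega)).add ?_).add ?_
  · exact ((hf.pd 0).mul hu).mono (by omega)
  · exact ((hf.pd 1).mul hv).mono (by omega)

lemma ordGE_compPS_sub_lie {ν n : ℕ} (hn : 2 ≤ n) {f a b r₁ r₂ : MvPowerSeries (Fin 2) ℂ}
    (hf : ordGE ν f) (ha : ordGE n a) (hb : ordGE n b)
    (hr₁ : ordGE (n + 1) r₁) (hr₂ : ordGE (n + 1) r₂) :
    ordGE (ν + n) (compPS (X 0 + (a + r₁)) (X 1 + (b + r₂)) f - f
      - (a * pd 0 (hpart ν f) + b * pd 1 (hpart ν f))) := by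
  have h := ordGE_compPS_sub_taylor hn hf (ha.add (hr₁.mono (by omega)))
    (hb.add (hr₂.mono (by omega)))
  have hlow := hf.sub_hpart
  rw [show compPS (X 0 + (a + r₁)) (X 1 + (b + r₂)) f - f
      - (a * pd 0 (hpart ν f) + b * pd 1 (hpart ν f))
      = (compPS (X 0 + (a + r₁)) (X 1 + (b + r₂)) f - f - pd 0 f * (a + r₁) - pd 1 f * (b + r₂))
        + a * pd 0 (f - hpart ν f) + b * pd 1 (f - hpart ν f) + pd 0 f * r₁ + pd 1 f * r₂
      by rw [pd_sub, pd_sub]; ring]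
  refine (((h.add ?_).add ?_).add ?_).add ?_
  · exact (ha.mul (hlow.pd 0)).mono (by omega)
  · exact (hb.mul (hlow.pd 1)).mono (by omega)
  · exact ((hf.pd 0).mul hr₁).mono (by omega)
  · exact ((hf.pd 1).mul hr₂).mono (by omega)

lemma ordGE_compPS_mul_pd_sub {ν n : ℕ} (hn : 2 ≤ n) {f u v a r : MvPowerSeries (Fin 2) ℂ}
    (hf : ordGE ν f) (hu : ordGE n u) (hv : ordGE n v) (ha : ordGE n a)
    (hr : ordGE (n + 1) r) (k : Fin 2) :
    ordGE (ν + n) (compPS (X 0 + u) (X 1 + v) f * pd k (a + r) - hpart ν f * pd k a) := by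
  have h := ordGE_compPS_sub_self hn hf hu hv
  rw [show compPS (X 0 + u) (X 1 + v) f * pd k (a + r) - hpart ν f * pd k a
      = ((compPS (X 0 + u) (X 1 + v) f - f) + (f - hpart ν f)) * pd k a
        + ((compPS (X 0 + u) (X 1 + v) f - f) + f) * pd k r
      by rw [pd_add]; ring]
  refine (((h.add hf.sub_hpart).mul (ha.pd k)).mono (by omega)).add ?_
  exact (((h.mono (by omega)).add hf).mul (hr.pd k)).mono (by omega)

lemma ordGE_lie_coeff {ν n : ℕ} {a b f p q : MvPowerSeries (Fin 2) ℂ}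
    (ha : ordGE n a) (hb : ordGE n b) (hf : ordGE ν f) (hp : ordGE ν p) (hq : ordGE ν q)
    (k : Fin 2) :
    ordGE (ν + n - 1) (a * pd 0 f + b * pd 1 f + p * pd k a + q * pd k b) := by
  refine (((?_ : ordGE _ _).add ?_).add ?_).add ?_
  · exact (ha.mul (hf.pd 0)).mono (by omega)
  · exact (hb.mul (hf.pd 1)).mono (by omega)
  · exact (hp.mul (ha.pd k)).mono (by omega)
  · exact (hq.mul (hb.pd k)).mono (by omega)

lemma ordGE_pullback_dx_sub_lie {ν n : ℕ} (hn : 2 ≤ n) {P Q a b r₁ r₂ : MvPowerSeries (Fin 2) ℂ}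
    (hP : ordGE ν P) (hQ : ordGE ν Q) (ha : ordGE n a) (hb : ordGE n b)
    (hr₁ : ordGE (n + 1) r₁) (hr₂ : ordGE (n + 1) r₂) :
    ordGE (ν + n) (compPS (X 0 + a + r₁) (X 1 + b + r₂) P * pd 0 (X 0 + a + r₁)
      + compPS (X 0 + a + r₁) (X 1 + b + r₂) Q * pd 0 (X 1 + b + r₂) - P
      - (a * pd 0 (hpart ν P) + b * pd 1 (hpart ν P)
        + hpart ν P * pd 0 a + hpart ν Q * pd 0 b)) := by
  have hu := ha.add (hr₁.mono (by omega))
  have hv := hb.add (hr₂.mono (by omega))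
  simp only [add_assoc (X _), pd_X_add, pd_X_add_of_ne one_ne_zero]
  set F := compPS (X 0 + (a + r₁)) (X 1 + (b + r₂)) P
  set G := compPS (X 0 + (a + r₁)) (X 1 + (b + r₂)) Q
  rw [show F * (1 + pd 0 (a + r₁)) + G * pd 0 (b + r₂) - P
      - (a * pd 0 (hpart ν P) + b * pd 1 (hpart ν P) + hpart ν P * pd 0 a + hpart ν Q * pd 0 b)
      = (F - P - (a * pd 0 (hpart ν P) + b * pd 1 (hpart ν P)))
        + (F * pd 0 (a + r₁) - hpart ν P * pd 0 a) + (G * pd 0 (b + r₂) - hpart ν Q * pd 0 b)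
      by ring]
  exact ((ordGE_compPS_sub_lie hn hP ha hb hr₁ hr₂).add
    (ordGE_compPS_mul_pd_sub hn hP hu hv ha hr₁ 0)).add
    (ordGE_compPS_mul_pd_sub hn hQ hu hv hb hr₂ 0)

lemma ordGE_pullback_dy_sub_lie {ν n : ℕ} (hn : 2 ≤ n) {P Q a b r₁ r₂ : MvPowerSeries (Fin 2) ℂ}
    (hP : ordGE ν P) (hQ : ordGE ν Q) (ha : ordGE n a) (hb : ordGE n b)
    (hr₁ : ordGE (n + 1) r₁) (hr₂ : ordGE (n + 1) r₂) :
    ordGE (ν + n) (compPS (X 0 + a + r₁) (X 1 + b + r₂) P * pd 1 (X 0 + a + r₁)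
      + compPS (X 0 + a + r₁) (X 1 + b + r₂) Q * pd 1 (X 1 + b + r₂) - Q
      - (a * pd 0 (hpart ν Q) + b * pd 1 (hpart ν Q)
        + hpart ν P * pd 1 a + hpart ν Q * pd 1 b)) := by
  have hu := ha.add (hr₁.mono (by omega))
  have hv := hb.add (hr₂.mono (by omega))
  simp only [add_assoc (X _), pd_X_add, pd_X_add_of_ne zero_ne_one]
  set F := compPS (X 0 + (a + r₁)) (X 1 + (b + r₂)) P
  set G := compPS (X 0 + (a + r₁)) (X 1 + (b + r₂)) Q
  rw [show F * pd 1 (a + r₁) + G * (1 + pd 1 (b + r₂)) - Q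
      - (a * pd 0 (hpart ν Q) + b * pd 1 (hpart ν Q) + hpart ν P * pd 1 a + hpart ν Q * pd 1 b)
      = (G - Q - (a * pd 0 (hpart ν Q) + b * pd 1 (hpart ν Q)))
        + (F * pd 1 (a + r₁) - hpart ν P * pd 1 a) + (G * pd 1 (b + r₂) - hpart ν Q * pd 1 b)
      by ring]
  exact ((ordGE_compPS_sub_lie hn hQ ha hb hr₁ hr₂).add
    (ordGE_compPS_mul_pd_sub hn hP hu hv ha hr₁ 1)).add
    (ordGE_compPS_mul_pd_sub hn hQ hu hv hb hr₂ 1)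

/-- Here `Φ = (x + a + r₁, y + b + r₂)`, so `Φⁿ = (a, b)`, and a 2-form is identified with its
`dx ∧ dy` coefficient. -/
theorem stmt3_general (ν n : ℕ) (hn : 2 ≤ n)
    (P Q P' Q' a b r₁ r₂ : MvPowerSeries (Fin 2) ℂ)
    (hP : ordGE ν P) (hQ : ordGE ν Q) (hP' : ordGE ν P') (hQ' : ordGE ν Q')
    (ha : isHomogPS n a) (hb : isHomogPS n b)
    (hr₁ : ordGE (n + 1) r₁) (hr₂ : ordGE (n + 1) r₂) :
    let φ : MvPowerSeries (Fin 2) ℂ := MvPowerSeries.X 0 + a + r₁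
    let ψ : MvPowerSeries (Fin 2) ℂ := MvPowerSeries.X 1 + b + r₂
    -- coefficients of the pulled-back 1-form `Φ*ω = (P∘Φ)dφ + (Q∘Φ)dψ`
    let A := compPS φ ψ P * pd 0 φ + compPS φ ψ Q * pd 0 ψ
    let B := compPS φ ψ P * pd 1 φ + compPS φ ψ Q * pd 1 ψ
    -- dx-, dy- coefficients of the Lie derivative `L_{∂Φⁿ} ω^ν`
    let L₁ := a * pd 0 (hpart ν P) + b * pd 1 (hpart ν P) +
      hpart ν P * pd 0 a + hpart ν Q * pd 0 b
    let L₂ := a * pd 0 (hpart ν Q) + b * pd 1 (hpart ν Q) +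
      hpart ν P * pd 1 a + hpart ν Q * pd 1 b
    ordGE (n + 2 * ν)
      ((A * Q' - B * P') - (P * Q' - Q * P') - (L₁ * hpart ν Q' - L₂ * hpart ν P')) := by
  intro φ ψ A B L₁ L₂
  have hA : ordGE (ν + n) (A - P - L₁) :=
    ordGE_pullback_dx_sub_lie hn hP hQ ha.ordGE hb.ordGE hr₁ hr₂
  have hB : ordGE (ν + n) (B - Q - L₂) :=
    ordGE_pullback_dy_sub_lie hn hP hQ ha.ordGE hb.ordGE hr₁ hr₂
  have hL₁ : ordGE (ν + n - 1) L₁ :=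
    ordGE_lie_coeff ha.ordGE hb.ordGE (ordGE_hpart ν P) (ordGE_hpart ν P) (ordGE_hpart ν Q) 0
  have hL₂ : ordGE (ν + n - 1) L₂ :=
    ordGE_lie_coeff ha.ordGE hb.ordGE (ordGE_hpart ν Q) (ordGE_hpart ν P) (ordGE_hpart ν Q) 1
  rw [show (A * Q' - B * P') - (P * Q' - Q * P') - (L₁ * hpart ν Q' - L₂ * hpart ν P')
      = (A - P - L₁) * Q' - (B - Q - L₂) * P' + L₁ * (Q' - hpart ν Q') - L₂ * (P' - hpart ν P')
      by ring]
  refine (((?_ : ordGE _ _).sub ?_).add ?_).sub ?_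
  · exact (hA.mul hQ').mono (by omega)
  · exact (hB.mul hP').mono (by omega)
  · exact (hL₁.mul hQ'.sub_hpart).mono (by omega)
  · exact (hL₂.mul hP'.sub_hpart).mono (by omega)

/-- Let `ω = P dx + Q dy`, `ω' = P' dx + Q' dy` have coefficients of order `≥ ν`, and
let `Φ = (x + a + r₁, y + b + r₂)` be a formal diffeomorphism tangent to the identity
whose lowest nonidentity homogeneous component `Φⁿ = (a, b)` has degree `n ≥ 2`
(`r₁, r₂` of order `≥ n + 1`).  Then, identifying 2-forms with their `dx ∧ dy`
coefficients, `Φ*ω ∧ ω' - ω ∧ ω' - (L_{∂Φⁿ} ω^ν) ∧ ω'^ν` has order `≥ n + 2ν`,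
where `ω^ν, ω'^ν` are the lowest (degree-`ν`) homogeneous parts,
`∂Φⁿ = a ∂ₓ + b ∂_y`, and
`L_X(Pdx+Qdy) = (aP_x + bP_y + P a_x + Q b_x)dx + (aQ_x + bQ_y + P a_y + Q b_y)dy`. -/
theorem stmt3 (ν n : ℕ) (hn : 2 ≤ n)
    (P Q P' Q' a b r₁ r₂ : MvPowerSeries (Fin 2) ℂ)
    (hP : ordGE ν P) (hQ : ordGE ν Q) (hP' : ordGE ν P') (hQ' : ordGE ν Q')
    (ha : isHomogPS n a) (hb : isHomogPS n b) (hab : ¬(a = 0 ∧ b = 0))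
    (hr₁ : ordGE (n + 1) r₁) (hr₂ : ordGE (n + 1) r₂) :
    let φ : MvPowerSeries (Fin 2) ℂ := MvPowerSeries.X 0 + a + r₁
    let ψ : MvPowerSeries (Fin 2) ℂ := MvPowerSeries.X 1 + b + r₂
    -- coefficients of the pulled-back 1-form `Φ*ω = (P∘Φ)dφ + (Q∘Φ)dψ`
    let A := compPS φ ψ P * pd 0 φ + compPS φ ψ Q * pd 0 ψ
    let B := compPS φ ψ P * pd 1 φ + compPS φ ψ Q * pd 1 ψ
    -- dx-, dy- coefficients of the Lie derivative `L_{∂Φⁿ} ω^ν`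
    let L₁ := a * pd 0 (hpart ν P) + b * pd 1 (hpart ν P) +
      hpart ν P * pd 0 a + hpart ν Q * pd 0 b
    let L₂ := a * pd 0 (hpart ν Q) + b * pd 1 (hpart ν Q) +
      hpart ν P * pd 1 a + hpart ν Q * pd 1 b
    ordGE (n + 2 * ν)
      ((A * Q' - B * P') - (P * Q' - Q * P') - (L₁ * hpart ν Q' - L₂ * hpart ν P')) :=
  stmt3_general ν n hn P Q P' Q' a b r₁ r₂ hP hQ hP' hQ' ha hb hr₁ hr₂
end
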